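/- arXiv:2211.08767 — 5 statements merged into one kernel-verified Lean document; each statement's English description precedes it below -/
import Mathlib

section
/- For every ε > 0, the function 𝒯_ε is twice differentiable on (0, ∞) with 𝒯_ε''(p) > 0 for all p > 0 (i.e. 𝒯_ε is strictly convex), and consequently the eigenvalue map p ↦ λ₂^ε(p) = √(−1/𝒯_ε'(p)) is strictly increasing on (0, ∞) while p ↦ λ₁^ε(p) = −√(−1/𝒯_ε'(p)) is strictly decreasing; this expresses the genuine nonlinearity of both characteristic fields of the soft-congestion p-system. -/
/-!
On `(1, ∞)` the pressure law is positive with `𝒫' < 0 < 𝒫''`, and `T` is its inverse. A monotone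
function whose image is a neighbourhood is continuous, so the inverse function theorem gives
`T' = 1 / 𝒫'(T) < 0`, and the chain rule gives `T'' = -𝒫''(T) / 𝒫'(T)³ > 0`. Thus `T'` is negative
and strictly increasing, hence so are `-1 / T'` and its square root.
-/

open Set Filter MeasureTheory Topology

/-- The singular pressure law `𝒫_ε(τ) = κ τ^{-γᵢ} + ε (τ-1)^{-γ_c}`. -/
noncomputable def Pe (κ γi γc ε τ : ℝ) : ℝ := κ * τ ^ (-γi) + ε * (τ - 1) ^ (-γc)

theorem ContinuousAt.of_strictAntiOn_of_rightInvOn {f g : ℝ → ℝ} {s t : Set ℝ} {a : ℝ}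
    (hf : StrictAntiOn f t) (hft : MapsTo f t s) (hg : MapsTo g s t) (hfg : RightInvOn g f s)
    (hs : s ∈ 𝓝 a) (ht : t ∈ 𝓝 (g a)) : ContinuousAt g a := by
  have hg_anti : AntitoneOn g s := fun x hx y hy hxy => not_lt.1 fun hlt =>
    hxy.not_gt (by simpa only [hfg hx, hfg hy] using hf (hg hx) (hg hy) hlt)
  have himage : t ⊆ g '' s := fun τ hτ =>
    ⟨f τ, hft hτ, hf.injOn (hg (hft hτ)) hτ (hfg (hft hτ))⟩
  exact continuousAt_of_monotoneOn_of_image_mem_nhds (β := ℝᵒᵈ) hg_anti.dual_right hs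
    (mem_of_superset ht himage)

theorem HasDerivAt.of_strictAntiOn_of_rightInvOn {f f' g : ℝ → ℝ} {s t : Set ℝ} {a : ℝ}
    (hs : IsOpen s) (ht : IsOpen t) (hf : StrictAntiOn f t) (hft : MapsTo f t s)
    (hg : MapsTo g s t) (hfg : RightInvOn g f s) (hf' : HasDerivAt f (f' (g a)) (g a))
    (hf'0 : f' (g a) ≠ 0) (ha : a ∈ s) : HasDerivAt g (f' (g a))⁻¹ a :=
  hf'.of_local_left_inverse
    (.of_strictAntiOn_of_rightInvOn hf hft hg hfg (hs.mem_nhds ha) (ht.mem_nhds (hg ha))) hf'0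
    (eventually_of_mem (hs.mem_nhds ha) hfg)

theorem hasDerivAt_deriv_of_eventually_hasDerivAt_inv {f' f'' g : ℝ → ℝ} {a : ℝ}
    (hg : ∀ᶠ x in 𝓝 a, HasDerivAt g (f' (g x))⁻¹ x) (hf' : HasDerivAt f' (f'' (g a)) (g a))
    (hf'0 : f' (g a) ≠ 0) : HasDerivAt (deriv g) (-f'' (g a) / f' (g a) ^ 3) a := by
  have hderiv : deriv g =ᶠ[𝓝 a] fun x => (f' (g x))⁻¹ := hg.mono fun _ hx => hx.deriv
  refine (((hf'.comp a hg.self_of_nhds).inv hf'0).congr_of_eventuallyEq hderiv).congr_deriv ?_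
  simp only [Function.comp_apply]
  field_simp

theorem StrictMonoOn.sqrt_neg_one_div {d : ℝ → ℝ} {s : Set ℝ} (hd : StrictMonoOn d s)
    (hneg : ∀ x ∈ s, d x < 0) : StrictMonoOn (fun x => Real.sqrt (-1 / d x)) s := by
  intro x hx y hy hxy
  refine Real.sqrt_lt_sqrt (div_nonneg_of_nonpos (by norm_num) (hneg x hx).le) ?_
  simpa only [neg_div, neg_lt_neg_iff] using
    one_div_lt_one_div_of_neg_of_lt (hneg y hy) (hd hx hy hxy)

noncomputable def Pe' (κ γi γc ε τ : ℝ) : ℝ :=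
  -(κ * γi * τ ^ (-γi - 1) + ε * γc * (τ - 1) ^ (-γc - 1))

noncomputable def Pe'' (κ γi γc ε τ : ℝ) : ℝ :=
  κ * γi * (γi + 1) * τ ^ (-γi - 2) + ε * γc * (γc + 1) * (τ - 1) ^ (-γc - 2)

section PressureLaw

variable {κ γi γc ε τ : ℝ}

theorem hasDerivAt_Pe (hτ : 1 < τ) : HasDerivAt (Pe κ γi γc ε) (Pe' κ γi γc ε τ) τ := by
  have h0 : 0 < τ := by linarith
  have h1 : 0 < τ - 1 := by linarith
  have h : HasDerivAt (Pe κ γi γc ε) _ τ :=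
    (((hasDerivAt_id τ).rpow_const (p := -γi) (Or.inl h0.ne')).const_mul κ).add
      ((((hasDerivAt_id τ).sub_const 1).rpow_const (p := -γc) (Or.inl h1.ne')).const_mul ε)
  exact h.congr_deriv (by simp only [Pe', id]; ring)

theorem hasDerivAt_Pe' (hτ : 1 < τ) : HasDerivAt (Pe' κ γi γc ε) (Pe'' κ γi γc ε τ) τ := by
  have h0 : 0 < τ := by linarith
  have h1 : 0 < τ - 1 := by linarith
  have h : HasDerivAt (Pe' κ γi γc ε) _ τ :=
    ((((hasDerivAt_id τ).rpow_const (p := -γi - 1) (Or.inl h0.ne')).const_mul (κ * γi)).add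
      ((((hasDerivAt_id τ).sub_const 1).rpow_const (p := -γc - 1)
        (Or.inl h1.ne')).const_mul (ε * γc))).neg
  exact h.congr_deriv (by simp only [Pe'', id]; ring_nf)

theorem Pe_pos (hκ : 0 < κ) (hε : 0 < ε) (hτ : 1 < τ) : 0 < Pe κ γi γc ε τ := by
  have : 0 < τ - 1 := by linarith
  unfold Pe; positivity

theorem Pe'_neg (hκ : 0 < κ) (hγi : 0 < γi) (hγc : 0 < γc) (hε : 0 < ε) (hτ : 1 < τ) :
    Pe' κ γi γc ε τ < 0 := by
  have : 0 < τ - 1 := by linarith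
  have : 0 < τ := by linarith
  unfold Pe'; simp only [Left.neg_neg_iff]; positivity

theorem Pe''_pos (hκ : 0 < κ) (hγi : 0 < γi) (hγc : 0 < γc) (hε : 0 < ε) (hτ : 1 < τ) :
    0 < Pe'' κ γi γc ε τ := by
  have : 0 < τ - 1 := by linarith
  have : 0 < τ := by linarith
  unfold Pe''; positivity

theorem strictAntiOn_Pe (hκ : 0 < κ) (hγi : 0 < γi) (hγc : 0 < γc) (hε : 0 < ε) :
    StrictAntiOn (Pe κ γi γc ε) (Ioi 1) :=
  strictAntiOn_of_deriv_neg (convex_Ioi 1)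
    (fun _ hτ => (hasDerivAt_Pe hτ).continuousAt.continuousWithinAt) fun _ hτ => by
      rw [interior_Ioi] at hτ
      exact (hasDerivAt_Pe hτ).deriv ▸ Pe'_neg hκ hγi hγc hε hτ

end PressureLaw

/-- For every `ε > 0`, `𝒯_ε` is twice differentiable on `(0,∞)` with `𝒯_ε'' > 0`
(strict convexity); consequently `p ↦ λ₂^ε(p) = √(-1/𝒯_ε'(p))` is strictly increasing
and `p ↦ λ₁^ε(p) = -√(-1/𝒯_ε'(p))` is strictly decreasing on `(0,∞)` (genuine
nonlinearity of both characteristic fields). -/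
theorem stmt2 (κ γi γc : ℝ) (hκ : 0 < κ) (hγi : 1 < γi) (hγc : 1 < γc)
    (ε : ℝ) (hε : 0 < ε)
    (T : ℝ → ℝ) (hT : ∀ p > (0:ℝ), 1 < T p ∧ Pe κ γi γc ε (T p) = p) :
    (∀ p > (0:ℝ), HasDerivAt T (deriv T p) p ∧
      HasDerivAt (deriv T) (deriv (deriv T) p) p ∧ 0 < deriv (deriv T) p) ∧
    StrictConvexOn ℝ (Ioi 0) T ∧
    StrictMonoOn (fun p => Real.sqrt (-1 / deriv T p)) (Ioi 0) ∧
    StrictAntiOn (fun p => -Real.sqrt (-1 / deriv T p)) (Ioi 0) := by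
  have hγi0 : 0 < γi := by linarith
  have hγc0 : 0 < γc := by linarith
  have hPe' : ∀ p > (0:ℝ), Pe' κ γi γc ε (T p) < 0 := fun p hp =>
    Pe'_neg hκ hγi0 hγc0 hε (hT p hp).1
  have hT' : ∀ p > (0:ℝ), HasDerivAt T (Pe' κ γi γc ε (T p))⁻¹ p := fun p hp =>
    .of_strictAntiOn_of_rightInvOn isOpen_Ioi isOpen_Ioi (strictAntiOn_Pe hκ hγi0 hγc0 hε)
      (fun _ hτ => Pe_pos hκ hε hτ) (fun q hq => (hT q hq).1) (fun q hq => (hT q hq).2)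
      (hasDerivAt_Pe (hT p hp).1) (hPe' p hp).ne hp
  have hT'' : ∀ p > (0:ℝ), HasDerivAt (deriv T)
      (-Pe'' κ γi γc ε (T p) / Pe' κ γi γc ε (T p) ^ 3) p := fun p hp =>
    hasDerivAt_deriv_of_eventually_hasDerivAt_inv (eventually_of_mem (Ioi_mem_nhds hp) hT')
      (hasDerivAt_Pe' (hT p hp).1) (hPe' p hp).ne
  have hT''_pos : ∀ p > (0:ℝ), 0 < deriv (deriv T) p := fun p hp =>
    (hT'' p hp).deriv ▸ div_pos_of_neg_of_neg
      (neg_neg_of_pos (Pe''_pos hκ hγi0 hγc0 hε (hT p hp).1)) (Odd.pow_neg (by decide) (hPe' p hp))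
  have hT'_mono : StrictMonoOn (deriv T) (Ioi 0) :=
    strictMonoOn_of_deriv_pos (convex_Ioi 0)
      (fun p hp => (hT'' p hp).continuousAt.continuousWithinAt)
      (fun p hp => hT''_pos p (by rwa [interior_Ioi] at hp))
  have hspeed₂ : StrictMonoOn (fun p => Real.sqrt (-1 / deriv T p)) (Ioi 0) :=
    hT'_mono.sqrt_neg_one_div fun p hp => (hT' p hp).deriv ▸ inv_lt_zero.2 (hPe' p hp)
  refine ⟨fun p hp => ⟨(hT' p hp).deriv ▸ hT' p hp, (hT'' p hp).deriv ▸ hT'' p hp,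
    hT''_pos p hp⟩, ?_, hspeed₂, fun p hp q hq hpq => neg_lt_neg (hspeed₂ hp hq hpq)⟩
  exact StrictMonoOn.strictConvexOn_of_deriv (convex_Ioi 0)
    (fun p hp => (hT' p hp).continuousAt.continuousWithinAt) (by rwa [interior_Ioi])
end

section
/- For every p > 0, 𝒯_ε(p) converges to 𝒯(p) as ε → 0⁺, where 𝒯(p) = (κ/p)^{1/γ_i} if 0 < p < κ and 𝒯(p) = 1 if p ≥ κ. -/
open Set Filter MeasureTheory Topology

/-- The limit specific-volume law `𝒯(p) = (κ/p)^{1/γᵢ}` for `p < κ` and `1` for `p ≥ κ`. -/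
noncomputable def Tlim (κ γi p : ℝ) : ℝ := if p < κ then (κ / p) ^ (1 / γi) else 1

/-- For every `p > 0`, `𝒯_ε(p) → 𝒯(p)` as `ε → 0⁺`. -/
theorem stmt3 (κ γi γc : ℝ) (hκ : 0 < κ) (hγi : 1 < γi) (hγc : 1 < γc)
    (T : ℝ → ℝ → ℝ)
    (hT : ∀ ε > (0:ℝ), ∀ p > (0:ℝ), 1 < T ε p ∧ Pe κ γi γc ε (T ε p) = p) :
    ∀ p > (0:ℝ),
      Tendsto (fun ε => T ε p) (nhdsWithin 0 (Ioi 0)) (nhds (Tlim κ γi p)) := by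
  intro p hp
  have hγi0 : (0:ℝ) < γi := by linarith
  have hγc0 : (0:ℝ) < γc := by linarith
  -- T ε p is always strictly above Tlim
  have hTgt : ∀ ε > (0:ℝ), Tlim κ γi p < T ε p := by
    intro ε hε
    obtain ⟨h1, h2⟩ := hT ε hε p hp
    have hT0 : (0:ℝ) < T ε p := by linarith
    have hsub : (0:ℝ) < T ε p - 1 := by linarith
    have hterm : 0 < ε * (T ε p - 1) ^ (-γc) := by positivity
    have hlt : κ * (T ε p) ^ (-γi) < p := by
      have h2' := h2; unfold Pe at h2'; linarith
    unfold Tlim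
    split_ifs with hpκ
    · have hq : (0:ℝ) < (T ε p) ^ γi := Real.rpow_pos_of_pos hT0 γi
      have h3 : κ / p < (T ε p) ^ γi := by
        rw [Real.rpow_neg hT0.le] at hlt
        rw [div_lt_iff₀ hp]
        have h4 := mul_lt_mul_of_pos_right hlt hq
        have h5 : κ * ((T ε p) ^ γi)⁻¹ * (T ε p) ^ γi = κ := by field_simp
        linarith
      calc (κ/p) ^ (1/γi) < ((T ε p) ^ γi) ^ (1/γi) :=
            Real.rpow_lt_rpow (by positivity) h3 (by positivity)
        _ = T ε p := by
            rw [← Real.rpow_mul hT0.le, mul_one_div, div_self hγi0.ne', Real.rpow_one]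
    · exact h1
  rw [tendsto_order]
  constructor
  · intro b hb
    filter_upwards [self_mem_nhdsWithin] with ε hε
    exact hb.trans (hTgt ε hε)
  · intro t ht
    -- first, 1 < t and κ * t ^ (-γi) < p
    have ht1 : 1 < t := by
      unfold Tlim at ht
      split_ifs at ht with hpκ
      · have : (1:ℝ) < (κ / p) ^ (1/γi) :=
          (Real.one_lt_rpow_iff_of_pos (by positivity)).2
            (Or.inl ⟨(one_lt_div hp).2 hpκ, by positivity⟩)
        linarith
      · exact ht
    have ht0 : (0:ℝ) < t := by linarith
    have htq : (0:ℝ) < t ^ γi := Real.rpow_pos_of_pos ht0 γi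
    have hkey : κ * t ^ (-γi) < p := by
      unfold Tlim at ht
      split_ifs at ht with hpκ
      · -- t > (κ/p)^{1/γi} ⇒ t^γi > κ/p
        have h3 : κ / p < t ^ γi := by
          calc κ / p = ((κ/p) ^ (1/γi)) ^ γi := by
                rw [← Real.rpow_mul (by positivity), one_div_mul_cancel hγi0.ne',
                  Real.rpow_one]
            _ < t ^ γi := Real.rpow_lt_rpow (by positivity) ht hγi0
        rw [Real.rpow_neg ht0.le]
        rw [div_lt_iff₀ hp, mul_comm] at h3
        calc κ * (t ^ γi)⁻¹ < (p * t ^ γi) * (t ^ γi)⁻¹ := by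
              exact mul_lt_mul_of_pos_right h3 (by positivity)
          _ = p := by field_simp
      · have : t ^ (-γi) < 1 :=
          Real.rpow_lt_one_of_one_lt_of_neg ht1 (by linarith)
        nlinarith [not_lt.1 hpκ]
    set ε₀ : ℝ := (p - κ * t ^ (-γi)) * (t - 1) ^ γc with hε₀def
    have hε₀ : 0 < ε₀ := by
      have : (0:ℝ) < (t - 1) ^ γc := Real.rpow_pos_of_pos (by linarith) γc
      nlinarith
    filter_upwards [Ioo_mem_nhdsGT_of_mem (⟨le_refl 0, hε₀⟩ : (0:ℝ) ∈ Ico 0 ε₀)]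
      with ε hε
    obtain ⟨hε0, hεlt⟩ := hε
    obtain ⟨h1, h2⟩ := hT ε hε0 p hp
    by_contra hcon
    push_neg at hcon
    have hT0 : (0:ℝ) < T ε p := by linarith
    have hsub : (0:ℝ) < T ε p - 1 := by linarith
    have hA : (T ε p) ^ (-γi) ≤ t ^ (-γi) :=
      Real.rpow_le_rpow_of_nonpos ht0 hcon (by linarith)
    have hB : (T ε p - 1) ^ (-γc) ≤ (t - 1) ^ (-γc) :=
      Real.rpow_le_rpow_of_nonpos (by linarith) (by linarith) (by linarith)
    have htc : (0:ℝ) < (t - 1) ^ γc := Real.rpow_pos_of_pos (by linarith) γc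
    have hC : ε * (t - 1) ^ (-γc) < p - κ * t ^ (-γi) := by
      rw [Real.rpow_neg (by linarith)]
      rw [hε₀def] at hεlt
      calc ε * ((t - 1) ^ γc)⁻¹
          < ((p - κ * t ^ (-γi)) * (t - 1) ^ γc) * ((t - 1) ^ γc)⁻¹ :=
            mul_lt_mul_of_pos_right hεlt (by positivity)
        _ = p - κ * t ^ (-γi) := by field_simp
    have h2' := h2
    unfold Pe at h2'
    nlinarith [mul_le_mul_of_nonneg_left hA hκ.le, mul_le_mul_of_nonneg_left hB hε0.le]
end

section
/- Let κ < 𝔭_c^- < 𝔭_c^+. Then there exist constants 0 < c₁ ≤ c₂ and a threshold ε̄ > 0 such that for every 0 < ε < ε̄ and every p ∈ [𝔭_c^-, 𝔭_c^+] one has c₁ ε^{1/γ_c} ≤ 𝒯_ε(p) − 1 ≤ c₂ ε^{1/γ_c}; in particular the specific volume in the congested region converges to the congestion threshold 1 at the rate ε^{1/γ_c}. -/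
open Set Filter MeasureTheory Topology

/-- On a congested-pressure interval `[𝔭_c⁻, 𝔭_c⁺] ⊂ (κ,∞)`, the specific volume satisfies
`c₁ ε^{1/γ_c} ≤ 𝒯_ε(p) − 1 ≤ c₂ ε^{1/γ_c}`: it converges to the congestion threshold `1`
at rate `ε^{1/γ_c}`. -/
theorem stmt7 (κ γi γc pc1 pc2 : ℝ) (hκ : 0 < κ) (hγi : 1 < γi) (hγc : 1 < γc)
    (hpc1 : κ < pc1) (hpc12 : pc1 < pc2)
    (T : ℝ → ℝ → ℝ)
    (hT : ∀ ε > (0:ℝ), ∀ p > (0:ℝ), 1 < T ε p ∧ Pe κ γi γc ε (T ε p) = p) :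
    ∃ c₁ c₂ εb : ℝ, 0 < c₁ ∧ c₁ ≤ c₂ ∧ 0 < εb ∧
      ∀ ε, 0 < ε → ε < εb → ∀ p ∈ Icc pc1 pc2,
        c₁ * ε ^ (1 / γc) ≤ T ε p - 1 ∧ T ε p - 1 ≤ c₂ * ε ^ (1 / γc) := by
  have hdpos : 0 < pc1 - κ := by linarith
  have hpc2pos : 0 < pc2 := by linarith
  have hγc0 : 0 < γc := by linarith
  refine ⟨pc2 ^ (-(1/γc)), (pc1 - κ) ^ (-(1/γc)), 1, Real.rpow_pos_of_pos hpc2pos _,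
    Real.rpow_le_rpow_of_nonpos hdpos (by linarith) (neg_nonpos.mpr (by positivity)), one_pos, ?_⟩
  intro ε hε _ p hp
  obtain ⟨hτ, hPe⟩ := hT ε hε p (by linarith [hp.1])
  set τ := T ε p with hτdef
  have ha : 0 < τ - 1 := by linarith
  have hkey : ε * (τ - 1) ^ (-γc) = p - κ * τ ^ (-γi) := by
    unfold Pe at hPe; linarith
  have hτpow1 : τ ^ (-γi) ≤ 1 :=
    Real.rpow_le_one_of_one_le_of_nonpos (by linarith) (by linarith)
  have hτpow0 : 0 ≤ κ * τ ^ (-γi) := by positivity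
  have h1 : ε * (τ - 1) ^ (-γc) ≤ pc2 := by
    rw [hkey]; linarith [hp.2]
  have h2 : pc1 - κ ≤ ε * (τ - 1) ^ (-γc) := by
    rw [hkey]; nlinarith [hp.1]
  have hrw : (τ - 1) ^ (-γc) = ((τ - 1) ^ γc)⁻¹ := Real.rpow_neg ha.le γc
  have hag : 0 < (τ - 1) ^ γc := Real.rpow_pos_of_pos ha γc
  rw [hrw] at h1 h2
  have h1' : ε / pc2 ≤ (τ - 1) ^ γc := by
    rw [div_le_iff₀ hpc2pos]
    nlinarith [mul_le_mul_of_nonneg_right h1 hag.le,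
      inv_mul_cancel₀ (ne_of_gt hag)]
  have h2' : (τ - 1) ^ γc ≤ ε / (pc1 - κ) := by
    rw [le_div_iff₀ hdpos]
    calc (τ - 1) ^ γc * (pc1 - κ) ≤ (τ - 1) ^ γc * (ε * ((τ - 1) ^ γc)⁻¹) := by gcongr
    _ = ε := by field_simp
  have hback : ((τ - 1) ^ γc) ^ (1/γc) = τ - 1 := by
    rw [← Real.rpow_mul ha.le, mul_one_div, div_self (ne_of_gt hγc0), Real.rpow_one]
  constructor
  · have := Real.rpow_le_rpow (by positivity) h1' (by positivity : (0:ℝ) ≤ 1/γc)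
    rw [hback, Real.div_rpow hε.le hpc2pos.le] at this
    calc pc2 ^ (-(1/γc)) * ε ^ (1/γc) = ε ^ (1/γc) / pc2 ^ (1/γc) := by
          rw [Real.rpow_neg hpc2pos.le]; ring
    _ ≤ τ - 1 := this
  · have := Real.rpow_le_rpow (by positivity) h2' (by positivity : (0:ℝ) ≤ 1/γc)
    rw [hback, Real.div_rpow hε.le hdpos.le] at this
    calc τ - 1 ≤ ε ^ (1/γc) / (pc1 - κ) ^ (1/γc) := this
    _ = (pc1 - κ) ^ (-(1/γc)) * ε ^ (1/γc) := by
          rw [Real.rpow_neg hdpos.le]; ring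
end

section
/- Let κ < 𝔭_c^- < 𝔭_c^+. Then there exist a constant c > 0 and a threshold ε̄ > 0 such that for every 0 < ε < ε̄ and every pair p_ℓ, p_r ∈ [𝔭_c^-, 𝔭_c^+] with p_ℓ ≠ p_r, the Rankine–Hugoniot speed of the discontinuity connecting them satisfies √((p_ℓ − p_r)/(𝒯_ε(p_r) − 𝒯_ε(p_ℓ))) ≥ c ε^{−1/(2γ_c)} (note that the quantity under the square root is positive since 𝒯_ε is strictly decreasing); hence the speed of waves connecting congested states tends to infinity as ε → 0. -/
open Set Filter MeasureTheory Topology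

/-!
For `p_r < p_ℓ` put `τ_ℓ = 𝒯_ε(p_ℓ) < τ_r = 𝒯_ε(p_r)`. The regular part `κ τ^{-γᵢ}` of the
pressure is decreasing and `t ↦ t^{-γ_c}` is convex, so
`p_ℓ - p_r ≥ ε γ_c (τ_r - τ_ℓ) (τ_r - 1)^{-γ_c-1}`.
Congestion pins the singular part: since `κ τ^{-γᵢ} < κ`, we get
`ε (τ_r - 1)^{-γ_c} ≥ p_r - κ ≥ 𝔭_c⁻ - κ`, i.e. `τ_r - 1 ≤ (ε / (𝔭_c⁻ - κ))^{1/γ_c}`.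
Combining, `s² ≥ γ_c (𝔭_c⁻ - κ)^{(γ_c+1)/γ_c} ε^{-1/γ_c}` for every `ε > 0`.
-/

open Real

lemma mul_sub_mul_rpow_le_rpow_neg_sub_rpow_neg {x y γ : ℝ} (hx : 0 < x) (hxy : x ≤ y)
    (hγ : 0 ≤ γ) : γ * (y - x) * y ^ (-γ - 1) ≤ x ^ (-γ) - y ^ (-γ) := by
  have hy : 0 < y := hx.trans_le hxy
  -- Bernoulli: `(y / x) ^ (γ + 1) ≥ 1 + (γ + 1) * (y / x - 1)`; clear denominators.
  have hbern := one_add_mul_self_le_rpow_one_add (s := y / x - 1)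
    (by linarith [div_pos hy hx]) (p := γ + 1) (by linarith)
  rw [add_sub_cancel, div_rpow hy.le hx.le, rpow_add_one hy.ne', rpow_add_one hx.ne'] at hbern
  rw [show -γ - 1 = -(γ + 1) by ring, rpow_neg hy.le, rpow_neg hx.le, rpow_neg hy.le,
    rpow_add_one hy.ne']
  field_simp at hbern ⊢
  linarith

lemma rpow_mul_rpow_le_mul_rpow_neg_sub_one {ε d z γ : ℝ} (hd : 0 < d) (hε : 0 < ε) (hγ : 0 < γ)
    (hz : 0 < z) (h : d ≤ ε * z ^ (-γ)) :
    d ^ ((γ + 1) / γ) * ε ^ (-1 / γ) ≤ ε * z ^ (-γ - 1) := by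
  have hdz : d / ε ≤ z ^ (-γ) := by rwa [div_le_iff₀ hε, mul_comm]
  have hpow : (d / ε) ^ ((γ + 1) / γ) ≤ z ^ (-γ - 1) := by
    calc (d / ε) ^ ((γ + 1) / γ) ≤ (z ^ (-γ)) ^ ((γ + 1) / γ) :=
          rpow_le_rpow (by positivity) hdz (by positivity)
      _ = z ^ (-γ - 1) := by
          rw [← rpow_mul hz.le]
          congr 1
          field_simp
          ring
  have hexp : ε ^ (-1 / γ) = ε / ε ^ ((γ + 1) / γ) := by
    rw [show -1 / γ = 1 - (γ + 1) / γ by field_simp; ring, rpow_sub hε, rpow_one]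
  calc d ^ ((γ + 1) / γ) * ε ^ (-1 / γ) = ε * (d / ε) ^ ((γ + 1) / γ) := by
        rw [hexp, div_rpow hd.le hε.le]
        ring
    _ ≤ ε * z ^ (-γ - 1) := mul_le_mul_of_nonneg_left hpow hε.le

section Pressure

variable {κ γi γc ε : ℝ}

lemma Pe_sub_le_mul_rpow (hκ : 0 ≤ κ) (hγi : 0 ≤ γi) {τ : ℝ} (hτ : 1 ≤ τ) :
    Pe κ γi γc ε τ - κ ≤ ε * (τ - 1) ^ (-γc) := by
  have : κ * τ ^ (-γi) ≤ κ :=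
    mul_le_of_le_one_right hκ (rpow_le_one_of_one_le_of_nonpos hτ (by linarith))
  unfold Pe
  linarith

lemma mul_sub_mul_rpow_le_Pe_sub_Pe (hκ : 0 ≤ κ) (hγi : 0 ≤ γi) (hγc : 0 ≤ γc) (hε : 0 ≤ ε)
    {σ τ : ℝ} (hσ : 1 < σ) (hστ : σ ≤ τ) :
    ε * (γc * (τ - σ) * (τ - 1) ^ (-γc - 1)) ≤ Pe κ γi γc ε σ - Pe κ γi γc ε τ := by
  have hsing := mul_sub_mul_rpow_le_rpow_neg_sub_rpow_neg (sub_pos.mpr hσ)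
    (sub_le_sub_right hστ 1) hγc
  rw [sub_sub_sub_cancel_right] at hsing
  have hreg : κ * τ ^ (-γi) ≤ κ * σ ^ (-γi) :=
    mul_le_mul_of_nonneg_left (rpow_le_rpow_of_nonpos (by linarith) hστ (by linarith)) hκ
  have := mul_le_mul_of_nonneg_left hsing hε
  unfold Pe
  linarith

lemma le_Pe_slope_of_lt (hκ : 0 ≤ κ) (hγi : 0 ≤ γi) (hγc : 0 < γc) (hε : 0 < ε) {d σ τ : ℝ}
    (hd : 0 < d) (hdτ : d ≤ Pe κ γi γc ε τ - κ) (hσ : 1 < σ) (hστ : σ < τ) :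
    γc * d ^ ((γc + 1) / γc) * ε ^ (-1 / γc) ≤
      (Pe κ γi γc ε σ - Pe κ γi γc ε τ) / (τ - σ) := by
  have hτ1 : 0 < τ - 1 := by linarith
  have hcongested := rpow_mul_rpow_le_mul_rpow_neg_sub_one hd hε hγc hτ1
    (hdτ.trans (Pe_sub_le_mul_rpow hκ hγi (by linarith)))
  have hchord := mul_sub_mul_rpow_le_Pe_sub_Pe hκ hγi hγc.le hε.le hσ hστ.le
  rw [le_div_iff₀ (sub_pos.mpr hστ)]
  calc γc * d ^ ((γc + 1) / γc) * ε ^ (-1 / γc) * (τ - σ)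
      = γc * (τ - σ) * (d ^ ((γc + 1) / γc) * ε ^ (-1 / γc)) := by ring
    _ ≤ γc * (τ - σ) * (ε * (τ - 1) ^ (-γc - 1)) :=
        mul_le_mul_of_nonneg_left hcongested (mul_nonneg hγc.le (by linarith))
    _ ≤ _ := by linarith

lemma le_Pe_slope_of_ne (hκ : 0 ≤ κ) (hγi : 0 ≤ γi) (hγc : 0 < γc) (hε : 0 < ε) {d σ τ : ℝ}
    (hd : 0 < d) (hdσ : d ≤ Pe κ γi γc ε σ - κ) (hdτ : d ≤ Pe κ γi γc ε τ - κ)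
    (hσ : 1 < σ) (hτ : 1 < τ) (hστ : σ ≠ τ) :
    γc * d ^ ((γc + 1) / γc) * ε ^ (-1 / γc) ≤
      (Pe κ γi γc ε σ - Pe κ γi γc ε τ) / (τ - σ) := by
  rcases hστ.lt_or_gt with h | h
  · exact le_Pe_slope_of_lt hκ hγi hγc hε hd hdτ hσ h
  · convert le_Pe_slope_of_lt hκ hγi hγc hε hd hdσ hτ h using 1
    rw [← neg_div_neg_eq, neg_sub, neg_sub]

end Pressure

theorem stmt8_general (κ γi γc pc1 pc2 : ℝ) (hκ : 0 < κ) (hγi : 1 < γi) (hγc : 1 < γc)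
    (hpc1 : κ < pc1)
    (T : ℝ → ℝ → ℝ)
    (hT : ∀ ε > (0:ℝ), ∀ p > (0:ℝ), 1 < T ε p ∧ Pe κ γi γc ε (T ε p) = p) :
    ∃ c εb : ℝ, 0 < c ∧ 0 < εb ∧
      ∀ ε, 0 < ε → ε < εb → ∀ pl ∈ Icc pc1 pc2, ∀ pr ∈ Icc pc1 pc2, pl ≠ pr →
        c * ε ^ (-1 / (2 * γc)) ≤ Real.sqrt ((pl - pr) / (T ε pr - T ε pl)) := by
  have hd : 0 < pc1 - κ := sub_pos.mpr hpc1
  set K := γc * (pc1 - κ) ^ ((γc + 1) / γc)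
  have hK : 0 < K := by positivity
  refine ⟨√K, 1, sqrt_pos.mpr hK, one_pos, fun ε hε _ pl hpl pr hpr hne => ?_⟩
  obtain ⟨hl, hPl⟩ := hT ε hε pl (by linarith [hpl.1])
  obtain ⟨hr, hPr⟩ := hT ε hε pr (by linarith [hpr.1])
  have hslope := le_Pe_slope_of_ne (γi := γi) (γc := γc) hκ.le (by linarith) (by linarith) hε hd
    (by linarith [hpl.1]) (by linarith [hpr.1]) hl hr (fun h => hne (by rw [← hPl, ← hPr, h]))
  rw [hPl, hPr] at hslope
  calc √K * ε ^ (-1 / (2 * γc)) = √(K * ε ^ (-1 / γc)) := by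
        rw [sqrt_mul hK.le, sqrt_eq_rpow (ε ^ _), ← rpow_mul hε.le]
        congr 2
        ring
    _ ≤ √((pl - pr) / (T ε pr - T ε pl)) := sqrt_le_sqrt hslope

/-- The Rankine–Hugoniot speed of a discontinuity connecting two congested states with
pressures in `[𝔭_c⁻, 𝔭_c⁺] ⊂ (κ,∞)` is at least `c ε^{-1/(2γ_c)}`: waves connecting
congested states have speeds tending to infinity as `ε → 0`. -/
theorem stmt8 (κ γi γc pc1 pc2 : ℝ) (hκ : 0 < κ) (hγi : 1 < γi) (hγc : 1 < γc)
    (hpc1 : κ < pc1) (hpc12 : pc1 < pc2)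
    (T : ℝ → ℝ → ℝ)
    (hT : ∀ ε > (0:ℝ), ∀ p > (0:ℝ), 1 < T ε p ∧ Pe κ γi γc ε (T ε p) = p) :
    ∃ c εb : ℝ, 0 < c ∧ 0 < εb ∧
      ∀ ε, 0 < ε → ε < εb → ∀ pl ∈ Icc pc1 pc2, ∀ pr ∈ Icc pc1 pc2, pl ≠ pr →
        c * ε ^ (-1 / (2 * γc)) ≤ Real.sqrt ((pl - pr) / (T ε pr - T ε pl)) :=
  stmt8_general κ γi γc pc1 pc2 hκ hγi hγc hpc1 T hT
end

section
/- Assume p_{0,2} < κ < p_{0,1} and u_{0,2} < u_{0,1} satisfy (p_{0,1} − p_{0,2})(𝒯^i(p_{0,2}) − 1) = (u_{0,1} − u_{0,2})², and set λ̄₂ = −(u_{0,2} − u_{0,1})/(𝒯^i(p_{0,2}) − 1). Then λ̄₂ > 0 and the piecewise constant function (p^ref, u^ref)(t,x) equal to (p_{0,1}, u_{0,1}) for x < λ̄₂ t and to (p_{0,2}, u_{0,2}) for x > λ̄₂ t is a weak distributional solution of the hard-congestion p-system on (0,∞) × ℝ: for every test function φ ∈ C¹_c((0,∞) × ℝ),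 ∬ (𝒯(p^ref) ∂_t φ − u^ref ∂_x φ) dx dt = 0 and ∬ (u^ref ∂_t φ + p^ref ∂_x φ) dx dt = 0. -/
/-!
Both equations are conservation laws `∂ₜ U + ∂ₓ F = 0` with `U, F` jumping across the line
`x = λ̄₂ t`, so it suffices that the Rankine–Hugoniot relation `λ̄₂ [U] = [F]` holds for each.
Then the integrand splits into the jump of `U` times the derivative of `φ` along the shock line,
plus a constant times `∂ₓ φ`. The second integrates to zero; the first does too after the shear
`(t, y) ↦ (t, y + λ̄₂ t)`, which preserves Lebesgue measure and turns the shock line into a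
coordinate axis, so Fubini reduces it to integrals of `∂ₜ` of compactly supported functions.
For the specific-volume equation the relation is the definition of `λ̄₂`; for the momentum
equation it follows from the hypothesis `hRH`.
-/

open Set Filter MeasureTheory Topology

theorem HasCompactSupport.comp_prodMk_left {X Y : Type*} [TopologicalSpace X]
    [R1Space X] [TopologicalSpace Y] {ψ : X × Y → ℝ} (hcs : HasCompactSupport ψ) (y : Y) :
    HasCompactSupport fun x => ψ (x, y) :=
  HasCompactSupport.intro (hcs.image continuous_fst) fun x hx => by
    by_contra h
    exact hx ⟨(x, y), subset_tsupport _ h, rfl⟩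

section

variable {E F : Type*} [NormedAddCommGroup E] [NormedSpace ℝ E]
  [NormedAddCommGroup F] [NormedSpace ℝ F]

theorem fderiv_comp_prodMk_left_apply {ψ : E × F → ℝ} (hψ : Differentiable ℝ ψ) (x v : E)
    (y : F) : fderiv ℝ (fun x => ψ (x, y)) x v = fderiv ℝ ψ (x, y) (v, 0) := by
  have h : HasFDerivAt (fun x => ψ (x, y)) ((fderiv ℝ ψ (x, y)).comp (.inl ℝ E F)) x :=
    (hψ _).hasFDerivAt.comp x (hasFDerivAt_prodMk_left x y)
  rw [h.fderiv]
  rfl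

variable [MeasurableSpace E] [BorelSpace E] {μ : Measure E}

theorem ContDiff.integrable_fderiv_apply [IsFiniteMeasureOnCompacts μ] {ψ : E → ℝ}
    (hψ : ContDiff ℝ 1 ψ) (hcs : HasCompactSupport ψ) (v : E) :
    Integrable (fun x => fderiv ℝ ψ x v) μ :=
  ((hψ.continuous_fderiv one_ne_zero).clm_apply continuous_const).integrable_of_hasCompactSupport
    (hcs.fderiv_apply ℝ v)

variable [FiniteDimensional ℝ E] [μ.IsAddHaarMeasure]

theorem integral_fderiv_apply_eq_zero {ψ : E → ℝ} (hψ : ContDiff ℝ 1 ψ)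
    (hcs : HasCompactSupport ψ) (v : E) : ∫ x, fderiv ℝ ψ x v ∂μ = 0 := by
  have := integral_mul_fderiv_eq_neg_fderiv_mul_of_integrable (μ := μ) (v := v)
    (f := fun _ => (1 : ℝ)) (by simp) (by simpa using hψ.integrable_fderiv_apply hcs v)
    (by simpa using hψ.continuous.integrable_of_hasCompactSupport hcs)
    (fun _ _ => differentiableAt_const _) (fun x _ => hψ.differentiable one_ne_zero x)
  simpa using this

theorem integral_mul_fderiv_inl_eq_zero [MeasurableSpace F] {ν : Measure F} [SFinite ν]
    (g : F → ℝ) {ψ : E × F → ℝ} (hψ : ContDiff ℝ 1 ψ) (hcs : HasCompactSupport ψ) (v : E) :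
    ∫ q, g q.2 * fderiv ℝ ψ q (v, 0) ∂μ.prod ν = 0 := by
  -- Off the integrable case the Bochner integral is `0` anyway, so `g` needs no hypotheses.
  by_cases hint : Integrable (fun q => g q.2 * fderiv ℝ ψ q (v, 0)) (μ.prod ν)
  swap
  · exact integral_undef hint
  have hslice (y : F) : ∫ x, g y * fderiv ℝ ψ (x, y) (v, 0) ∂μ = 0 := by
    have hψy : ContDiff ℝ 1 fun x => ψ (x, y) := hψ.comp (contDiff_id.prodMk contDiff_const)
    simp only [← fderiv_comp_prodMk_left_apply (hψ.differentiable one_ne_zero),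
      integral_const_mul, integral_fderiv_apply_eq_zero hψy (hcs.comp_prodMk_left y), mul_zero]
  rw [integral_prod_symm _ hint]
  simp only [hslice, integral_zero]

end

section

variable {E F : Type*} [NormedAddCommGroup E] [NormedSpace ℝ E] [FiniteDimensional ℝ E]
  [MeasurableSpace E] [BorelSpace E] {μ : Measure E} [μ.IsAddHaarMeasure]
  [NormedAddCommGroup F] [NormedSpace ℝ F] [FiniteDimensional ℝ F]
  [MeasurableSpace F] [BorelSpace F] {ν : Measure F} [SFinite ν] [ν.IsAddRightInvariant]

theorem measurePreserving_skewProd (f : E →L[ℝ] F) :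
    MeasurePreserving ((ContinuousLinearEquiv.refl ℝ E).skewProd (.refl ℝ F) f)
      (μ.prod ν) (μ.prod ν) :=
  (MeasurePreserving.id μ).skew_product (g := fun x y => y + f x)
    (measurable_snd.add (f.measurable.comp measurable_fst))
    (ae_of_all _ fun x => map_add_right_eq_self ν (f x))

theorem integral_mul_fderiv_skewProd_eq_zero (f : E →L[ℝ] F) (g : F → ℝ) {φ : E × F → ℝ}
    (hφ : ContDiff ℝ 1 φ) (hcs : HasCompactSupport φ) (v : E) :
    ∫ q, g (q.2 - f q.1) * fderiv ℝ φ q (v, f v) ∂μ.prod ν = 0 := by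
  set L := (ContinuousLinearEquiv.refl ℝ E).skewProd (.refl ℝ F) f
  rw [← (measurePreserving_skewProd f).integral_comp L.toHomeomorph.measurableEmbedding]
  have := integral_mul_fderiv_inl_eq_zero (μ := μ) (ν := ν) g (hφ.comp L.contDiff)
    (hcs.comp_homeomorph L.toHomeomorph) v
  simpa [L, ContinuousLinearEquiv.comp_right_fderiv] using this

end

theorem integral_shock_weak_eq_zero {lam a b c d : ℝ} (hRH : c - lam * a = d - lam * b)
    {φ : ℝ × ℝ → ℝ} (hφ : ContDiff ℝ 1 φ) (hcs : HasCompactSupport φ) :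
    ∫ q : ℝ × ℝ, ((if q.2 < lam * q.1 then a else b) * fderiv ℝ φ q (1, 0)
      + (if q.2 < lam * q.1 then c else d) * fderiv ℝ φ q (0, 1)) = 0 := by
  set jump : ℝ → ℝ := fun s => if s < 0 then a else b
  have hsplit (q : ℝ × ℝ) :
      (if q.2 < lam * q.1 then a else b) * fderiv ℝ φ q (1, 0)
        + (if q.2 < lam * q.1 then c else d) * fderiv ℝ φ q (0, 1)
      = jump (q.2 - lam * q.1) * fderiv ℝ φ q (1, lam)
        + (c - lam * a) * fderiv ℝ φ q (0, 1) := by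
    have hdir : fderiv ℝ φ q (1, lam) = fderiv ℝ φ q (1, 0) + lam * fderiv ℝ φ q (0, 1) := by
      rw [← smul_eq_mul, ← map_smul, ← map_add]
      simp
    by_cases h : q.2 < lam * q.1
    · simp only [jump, h, sub_neg, if_true, hdir]
      ring
    · simp only [jump, h, sub_neg, if_false, hdir, hRH]
      ring
  have hline := integral_mul_fderiv_skewProd_eq_zero (μ := volume) (ν := volume)
    (lam • ContinuousLinearMap.id ℝ ℝ) jump hφ hcs 1
  simp only [smul_apply, ContinuousLinearMap.id_apply, smul_eq_mul,
    mul_one, ← Measure.volume_eq_prod] at hline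
  have hjump_int : Integrable fun q : ℝ × ℝ => jump (q.2 - lam * q.1) * fderiv ℝ φ q (1, lam) :=
    (hφ.integrable_fderiv_apply hcs _).bdd_mul (c := max |a| |b|)
      (Measurable.ite (measurableSet_lt (by fun_prop) measurable_const) measurable_const
        measurable_const).aestronglyMeasurable
      (ae_of_all _ fun q => by by_cases h : q.2 - lam * q.1 < 0 <;> simp [jump, h])
  rw [integral_congr_ae (ae_of_all _ hsplit),
    integral_add hjump_int ((hφ.integrable_fderiv_apply hcs _).const_mul _), hline,
    integral_const_mul, integral_fderiv_apply_eq_zero hφ hcs, mul_zero, add_zero]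

theorem stmt10_general (κ γi p01 p02 u01 u02 : ℝ)
    (hγi : 1 < γi)
    (hp02 : 0 < p02) (h1 : p02 < κ) (h2 : κ < p01) (hu : u02 < u01)
    (hRH : (p01 - p02) * ((κ / p02) ^ (1 / γi) - 1) = (u01 - u02) ^ 2)
    (lam2 : ℝ) (hlam2 : lam2 = -(u02 - u01) / ((κ / p02) ^ (1 / γi) - 1)) :
    0 < lam2 ∧
    ∀ φ : ℝ × ℝ → ℝ, ContDiff ℝ 1 φ → HasCompactSupport φ →
      tsupport φ ⊆ (Ioi (0:ℝ)) ×ˢ (univ : Set ℝ) →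
      (∫ q : ℝ × ℝ,
        (Tlim κ γi (if q.2 < lam2 * q.1 then p01 else p02) * fderiv ℝ φ q (1, 0)
          - (if q.2 < lam2 * q.1 then u01 else u02) * fderiv ℝ φ q (0, 1))) = 0 ∧
      (∫ q : ℝ × ℝ,
        ((if q.2 < lam2 * q.1 then u01 else u02) * fderiv ℝ φ q (1, 0)
          + (if q.2 < lam2 * q.1 then p01 else p02) * fderiv ℝ φ q (0, 1))) = 0 := by
  set T := (κ / p02) ^ (1 / γi)
  have hT : 1 < T := Real.one_lt_rpow ((one_lt_div hp02).mpr h1) (by positivity)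
  have hT_left : Tlim κ γi p01 = 1 := if_neg h2.le.not_gt
  have hT_right : Tlim κ γi p02 = T := if_pos h1
  have hvolume_RH : lam2 * (T - 1) = u01 - u02 := by
    rw [hlam2]
    field_simp [(sub_pos.mpr hT).ne']
    ring
  have hmomentum_RH : lam2 * (u01 - u02) = p01 - p02 := by
    refine mul_right_cancel₀ (sub_pos.mpr hT).ne' ?_
    rw [hRH, mul_right_comm, hvolume_RH, sq]
  refine ⟨hlam2 ▸ div_pos (by linarith) (by linarith), fun φ hφ hcs _ => ⟨?_, ?_⟩⟩
  · simp only [sub_eq_add_neg, ← neg_mul, apply_ite (Tlim κ γi), neg_ite, hT_left,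
      hT_right]
    exact integral_shock_weak_eq_zero (by linarith) hφ hcs
  · exact integral_shock_weak_eq_zero (by linarith) hφ hcs

/-- The single propagating 2-shock interface: the piecewise constant function equal to
the congested state `(p₀₁,u₀₁)` for `x < λ̄₂ t` and to the free state `(p₀₂,u₀₂)` for
`x > λ̄₂ t` travels with positive speed `λ̄₂` and is a weak distributional solution of the
hard-congestion p-system `∂ₜ 𝒯(p) − ∂ₓ u = 0`, `∂ₜ u + ∂ₓ p = 0` on `(0,∞) × ℝ`. -/
theorem stmt10 (κ γi γc p01 p02 u01 u02 : ℝ)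
    (hκ : 0 < κ) (hγi : 1 < γi) (hγc : 1 < γc)
    (hp02 : 0 < p02) (h1 : p02 < κ) (h2 : κ < p01) (hu : u02 < u01)
    (hRH : (p01 - p02) * ((κ / p02) ^ (1 / γi) - 1) = (u01 - u02) ^ 2)
    (lam2 : ℝ) (hlam2 : lam2 = -(u02 - u01) / ((κ / p02) ^ (1 / γi) - 1)) :
    0 < lam2 ∧
    ∀ φ : ℝ × ℝ → ℝ, ContDiff ℝ 1 φ → HasCompactSupport φ →
      tsupport φ ⊆ (Ioi (0:ℝ)) ×ˢ (univ : Set ℝ) →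
      (∫ q : ℝ × ℝ,
        (Tlim κ γi (if q.2 < lam2 * q.1 then p01 else p02) * fderiv ℝ φ q (1, 0)
          - (if q.2 < lam2 * q.1 then u01 else u02) * fderiv ℝ φ q (0, 1))) = 0 ∧
      (∫ q : ℝ × ℝ,
        ((if q.2 < lam2 * q.1 then u01 else u02) * fderiv ℝ φ q (1, 0)
          + (if q.2 < lam2 * q.1 then p01 else p02) * fderiv ℝ φ q (0, 1))) = 0 :=
  stmt10_general κ γi p01 p02 u01 u02 hγi hp02 h1 h2 hu hRH lam2 hlam2
end
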